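/- Let K = ℚ(√D) with D ≥ 2 squarefree, let i ≥ -1 be odd, 0 ≤ r ≤ u_{i+2} - 1, and let β_j = α_{i,r} be the corresponding semiconvergent indecomposable. Then the number of partitions of 2β_j into indecomposable totally positive parts equals min{r+1, u_{i+2}-r+1}, and the number of partitions of β_j + β_{j+1} into indecomposable parts equals min{r+1, u_{i+2}-r}. -/

import Mathlib

/-!
For odd `i` let `A = α_i`, `B = α_{i+1}` and `N = u_{i+2}`. Then `(A, B)` is a basis of `O_K`
of determinant `1`, and in this basis every totally positive element has `A`-coordinate at
least `1`, with equality exactly for the semiconvergents `A + s B`, `0 ≤ s ≤ N`; in particular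
these are indecomposable. Both `2β_j = 2A + 2r B` and `β_j + β_{j+1} = 2A + (2r + 1) B` have
`A`-coordinate `2`, so their partitions into indecomposables are the pairs
`{A + s B, A + (t - s) B}` with `0 ≤ s, t - s ≤ N`, and counting these gives the formulas.
That `β_{j+1} = A + (r + 1) B` holds because a totally positive `g` strictly between two
consecutive semiconvergents `p < q` in the first embedding has `g - p` totally positive.
-/

noncomputable section

/-- `ω_D`: the standard generator of the ring of integers of `ℚ(√D)`. -/
def omegaD (D : ℕ) : ℝ := if D % 4 = 1 then (1 + Real.sqrt D) / 2 else Real.sqrt D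

/-- The Galois conjugate of `ω_D`. -/
def omegaD' (D : ℕ) : ℝ := if D % 4 = 1 then (1 - Real.sqrt D) / 2 else -Real.sqrt D

/-- Elements of `O_K` in coordinates: `(x, y)` represents `x + y·ω_D`. -/
abbrev OK : Type := ℤ × ℤ

/-- First real embedding. -/
def emb1 (D : ℕ) (a : OK) : ℝ := a.1 + a.2 * omegaD D

/-- Second real embedding (Galois conjugate). -/
def emb2 (D : ℕ) (a : OK) : ℝ := a.1 + a.2 * omegaD' D

/-- Galois conjugation on `O_K`. -/
def conjOK (D : ℕ) (a : OK) : OK := (a.1 + (if D % 4 = 1 then (1 : ℤ) else 0) * a.2, -a.2)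

/-- Total positivity. -/
def TotPos (D : ℕ) (a : OK) : Prop := 0 < emb1 D a ∧ 0 < emb2 D a

/-- The field norm. -/
def Nm (D : ℕ) (a : OK) : ℝ := emb1 D a * emb2 D a

/-- Indecomposability: totally positive and not a sum of two totally positive elements. -/
def Indec (D : ℕ) (a : OK) : Prop :=
  TotPos D a ∧ ¬ ∃ b c : OK, TotPos D b ∧ TotPos D c ∧ a = b + c

/-- Number of partitions of `α` into indecomposable parts (`p_K(α|I)`). -/
def pKI (D : ℕ) (α : OK) : ℕ :=
  Set.ncard {s : Multiset OK | (∀ x ∈ s, Indec D x) ∧ s.sum = α}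

/-- Number of partitions of `α` into totally positive parts (`p_K(α)`). -/
def pK (D : ℕ) (α : OK) : ℕ :=
  Set.ncard {s : Multiset OK | (∀ x ∈ s, TotPos D x) ∧ s.sum = α}

/-- Discriminant of `ℚ(√D)`. -/
def disc (D : ℕ) : ℕ := if D % 4 = 1 then D else 4 * D

/-- The ordered two-sided sequence of indecomposables together with
the coefficients `v j ≥ 2` from the Hejda–Kala relation `v_j β_j = β_{j-1} + β_{j+1}`. -/
structure BetaSeq (D : ℕ) (β : ℤ → OK) (v : ℤ → ℤ) : Prop where
  indec : ∀ j, Indec D (β j)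
  surj : ∀ a : OK, Indec D a → ∃ j, β j = a
  mono : StrictMono fun j => emb1 D (β j)
  zero : β 0 = (1, 0)
  conj_eq : ∀ j, β (-j) = conjOK D (β j)
  v_two_le : ∀ j, 2 ≤ v j
  v_symm : ∀ j, v (-j) = v j
  rel : ∀ j, v j • β j = β (j - 1) + β (j + 1)

/-- The continued fraction data of `ω_D = [⌈u₀/2⌉, \overline{u₁, …, u_s}]` (with `u_s = u_0`),
with tails `γ_0 = ω_D`, `γ_i = [u_i, u_{i+1}, …]` for `i ≥ 1`. -/
structure CFData (D : ℕ) (u : ℕ → ℕ) (γ : ℕ → ℝ) : Prop where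
  gamma_zero : γ 0 = omegaD D
  u_zero : (u 0 : ℤ) = 2 * ⌊omegaD D⌋ - (if D % 4 = 1 then 1 else 0)
  head : omegaD D = (⌊omegaD D⌋ : ℝ) + 1 / γ 1
  step : ∀ i, 1 ≤ i → γ i = u i + 1 / γ (i + 1)
  one_lt : ∀ i, 1 ≤ i → 1 < γ i
  floor_eq : ∀ i, 1 ≤ i → (u i : ℤ) = ⌊γ i⌋
  period : ∃ s, 1 ≤ s ∧ u s = u 0 ∧ ∀ i, 1 ≤ i → u (i + s) = u i

/-- The convergents `α_i = p_i + q_i ξ_D`, indexed by `i ≥ -1`. -/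
structure ConvData (D : ℕ) (u : ℕ → ℕ) (a : ℤ → OK) : Prop where
  neg_one : a (-1) = (1, 0)
  zero : a 0 = (⌊omegaD D⌋, 0) + (if D % 4 = 1 then ((-1 : ℤ), (1 : ℤ)) else (0, 1))
  recur : ∀ i : ℤ, -1 ≤ i → a (i + 2) = (u (i + 2).toNat : ℤ) • a (i + 1) + a i

/-- Semiconvergents `α_{i,r} = α_i + r·α_{i+1}`. -/
def semiconv (a : ℤ → OK) (i r : ℤ) : OK := a i + r • a (i + 1)

namespace OK

def det (x y : OK) : ℤ := x.1 * y.2 - x.2 * y.1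

@[simps]
def detLeft (y : OK) : OK →+ ℤ where
  toFun x := det x y
  map_zero' := by simp [det]
  map_add' x x' := by simp only [det, Prod.fst_add, Prod.snd_add]; ring

theorem eq_det_smul_add_det_smul {p q : OK} (h : det p q = 1) (g : OK) :
    g = det g q • p + det p g • q := by
  unfold det at *
  ext <;> simp only [Prod.fst_add, Prod.snd_add, Prod.smul_fst, Prod.smul_snd, smul_eq_mul]
  · linear_combination -g.1 * h
  · linear_combination -g.2 * h

end OK

open OK

@[simp] theorem emb1_add (D : ℕ) (x y : OK) : emb1 D (x + y) = emb1 D x + emb1 D y := by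
  simp only [emb1, Prod.fst_add, Prod.snd_add, Int.cast_add]; ring

@[simp] theorem emb1_zsmul (D : ℕ) (c : ℤ) (x : OK) : emb1 D (c • x) = c * emb1 D x := by
  simp only [emb1, Prod.smul_fst, Prod.smul_snd, smul_eq_mul, Int.cast_mul]; ring

@[simp] theorem emb1_sub (D : ℕ) (x y : OK) : emb1 D (x - y) = emb1 D x - emb1 D y := by
  simp only [emb1, Prod.fst_sub, Prod.snd_sub, Int.cast_sub]; ring

@[simp] theorem emb2_add (D : ℕ) (x y : OK) : emb2 D (x + y) = emb2 D x + emb2 D y := by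
  simp only [emb2, Prod.fst_add, Prod.snd_add, Int.cast_add]; ring

@[simp] theorem emb2_zsmul (D : ℕ) (c : ℤ) (x : OK) : emb2 D (c • x) = c * emb2 D x := by
  simp only [emb2, Prod.smul_fst, Prod.smul_snd, smul_eq_mul, Int.cast_mul]; ring

@[simp] theorem emb2_sub (D : ℕ) (x y : OK) : emb2 D (x - y) = emb2 D x - emb2 D y := by
  simp only [emb2, Prod.fst_sub, Prod.snd_sub, Int.cast_sub]; ring

theorem emb1_eq_of_det_eq_one {D : ℕ} {p q : OK} (h : det p q = 1) (g : OK) :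
    emb1 D g = det g q * emb1 D p + det p g * emb1 D q := by
  conv_lhs => rw [eq_det_smul_add_det_smul h g]
  simp only [emb1_add, emb1_zsmul]

theorem emb2_eq_of_det_eq_one {D : ℕ} {p q : OK} (h : det p q = 1) (g : OK) :
    emb2 D g = det g q * emb2 D p + det p g * emb2 D q := by
  conv_lhs => rw [eq_det_smul_add_det_smul h g]
  simp only [emb2_add, emb2_zsmul]

theorem totPos_sub_of_emb1_mem_Ioo {D : ℕ} {p q g : OK} (hdet : det p q = 1)
    (hp : 0 < emb1 D p) (hpq₁ : emb1 D p < emb1 D q) (hq : 0 < emb2 D q)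
    (hpq₂ : emb2 D q < emb2 D p) (hg : TotPos D g) (hpg : emb1 D p < emb1 D g)
    (hgq : emb1 D g < emb1 D q) : TotPos D (g - p) := by
  refine ⟨by rw [emb1_sub]; linarith, ?_⟩
  have hg₁ := emb1_eq_of_det_eq_one (D := D) hdet g
  have hg₂ := emb2_eq_of_det_eq_one (D := D) hdet g
  set c := det g q
  set d := det p g
  rw [emb2_sub, hg₂]
  rcases le_or_gt d 0 with hd | hd
  · -- `emb1 g > emb1 p` forces `c + d ≥ 2`
    have hcd : 1 < c + d := by
      have : (1 : ℝ) < c + d := by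
        have : (d : ℝ) * emb1 D q ≤ d * emb1 D p := by
          exact mul_le_mul_of_nonpos_left hpq₁.le (by exact_mod_cast hd)
        nlinarith
      exact_mod_cast this
    have : (d : ℝ) * emb2 D p ≤ d * emb2 D q :=
      mul_le_mul_of_nonpos_left hpq₂.le (by exact_mod_cast hd)
    have : (2 : ℝ) ≤ c + d := by exact_mod_cast hcd
    nlinarith
  · -- then `c ≤ 0`, and total positivity of `g` pushes it beyond `q` in the first embedding
    exfalso
    have hc : c ≤ 0 := by
      by_contra! hc
      have : (1 : ℝ) ≤ c := by exact_mod_cast hc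
      have : (1 : ℝ) ≤ d := by exact_mod_cast hd
      nlinarith
    have hcd : 0 < c + d := by
      have : (c : ℝ) * emb2 D p ≤ c * emb2 D q :=
        mul_le_mul_of_nonpos_left hpq₂.le (by exact_mod_cast hc)
      have : (0 : ℝ) < c + d := by nlinarith [hg.2]
      exact_mod_cast this
    have : (c : ℝ) * emb1 D q ≤ c * emb1 D p :=
      mul_le_mul_of_nonpos_left hpq₁.le (by exact_mod_cast hc)
    have : (1 : ℝ) ≤ c + d := by exact_mod_cast hcd
    nlinarith

/-- With `A = α_i`, `B = α_{i+1}` and `N = u_{i+2}` for odd `i`, the elements `A + s • B`,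
`0 ≤ s ≤ N`, are the semiconvergents `α_{i,s}`. -/
structure SemiconvBasis (D : ℕ) (A B : OK) (N : ℤ) : Prop where
  det_eq_one : det A B = 1
  emb1_pos : 0 < emb1 D A
  emb1_lt : emb1 D A < emb1 D B
  nonneg : 0 ≤ N
  emb2_pos : 0 < emb2 D (A + N • B)
  emb2_neg : emb2 D (A + (N + 1) • B) < 0

namespace SemiconvBasis

variable {D : ℕ} {A B : OK} {N : ℤ}

theorem emb1_right_pos (h : SemiconvBasis D A B N) : 0 < emb1 D B :=
  h.emb1_pos.trans h.emb1_lt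

theorem emb2_right_neg (h : SemiconvBasis D A B N) : emb2 D B < 0 := by
  have h₁ := h.emb2_pos
  have h₂ := h.emb2_neg
  simp only [emb2_add, emb2_zsmul, Int.cast_add, Int.cast_one] at h₁ h₂
  linarith

theorem emb2_left_pos (h : SemiconvBasis D A B N) : 0 < emb2 D A := by
  have h₁ := h.emb2_pos
  have hB := h.emb2_right_neg
  have hN : (0 : ℝ) ≤ N := by exact_mod_cast h.nonneg
  simp only [emb2_add, emb2_zsmul] at h₁
  nlinarith

theorem right_ne_zero (h : SemiconvBasis D A B N) : B ≠ 0 := by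
  rintro rfl
  simpa [emb1] using h.emb1_right_pos

theorem add_zsmul_injective (h : SemiconvBasis D A B N) :
    Function.Injective fun s : ℤ => A + s • B :=
  (add_right_injective A).comp (smul_left_injective ℤ h.right_ne_zero)

theorem totPos_add_zsmul_iff (h : SemiconvBasis D A B N) (s : ℤ) :
    TotPos D (A + s • B) ↔ 0 ≤ s ∧ s ≤ N := by
  have h₁ := h.emb1_lt
  have h₂ := h.emb2_pos
  have h₃ := h.emb2_neg
  have hA := h.emb1_pos
  have hB := h.emb2_right_neg
  simp only [TotPos, emb1_add, emb2_add, emb1_zsmul, emb2_zsmul, Int.cast_add,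
    Int.cast_one] at h₂ h₃ ⊢
  constructor
  · rintro ⟨hs₁, hs₂⟩
    constructor
    · by_contra! hs
      have : (s : ℝ) ≤ -1 := by exact_mod_cast (show s ≤ -1 by omega)
      nlinarith
    · by_contra! hs
      have : (N : ℝ) + 1 ≤ s := by exact_mod_cast (show N + 1 ≤ s by omega)
      nlinarith
  · rintro ⟨hs₁, hs₂⟩
    have : (0 : ℝ) ≤ s := by exact_mod_cast hs₁
    have : (s : ℝ) ≤ N := by exact_mod_cast hs₂
    constructor <;> nlinarith

-- `det x B` is the `A`-coordinate of `x` in the basis `(A, B)`.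
theorem one_le_det_of_totPos (h : SemiconvBasis D A B N) {x : OK} (hx : TotPos D x) :
    1 ≤ det x B := by
  have hx₁ := emb1_eq_of_det_eq_one (D := D) h.det_eq_one x
  have hx₂ := emb2_eq_of_det_eq_one (D := D) h.det_eq_one x
  have hA₂ := h.emb2_left_pos
  have hB₂ := h.emb2_right_neg
  have hB₁ := h.emb1_right_pos
  by_contra! hc
  have hc' : (det x B : ℝ) ≤ 0 := by exact_mod_cast (show det x B ≤ 0 by omega)
  have hd : det A x < 0 := by
    have : (det A x : ℝ) < 0 := by nlinarith [hx.2]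
    exact_mod_cast this
  have hd' : (det A x : ℝ) ≤ -1 := by exact_mod_cast (show det A x ≤ -1 by omega)
  nlinarith [hx.1, h.emb1_pos]

theorem exists_eq_add_zsmul (h : SemiconvBasis D A B N) {x : OK} (hx : TotPos D x)
    (hx₁ : det x B = 1) : ∃ s, (0 ≤ s ∧ s ≤ N) ∧ x = A + s • B := by
  have hx' : x = A + det A x • B := by
    simpa [hx₁] using eq_det_smul_add_det_smul h.det_eq_one x
  exact ⟨det A x, (h.totPos_add_zsmul_iff _).1 (hx' ▸ hx), hx'⟩

theorem det_add_zsmul (h : SemiconvBasis D A B N) (s : ℤ) : det (A + s • B) B = 1 := by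
  have := h.det_eq_one
  simp only [det, Prod.fst_add, Prod.snd_add, Prod.smul_fst, Prod.smul_snd, smul_eq_mul] at *
  linear_combination this

theorem indec_add_zsmul (h : SemiconvBasis D A B N) {s : ℤ} (hs : 0 ≤ s ∧ s ≤ N) :
    Indec D (A + s • B) := by
  refine ⟨(h.totPos_add_zsmul_iff s).2 hs, ?_⟩
  rintro ⟨x, y, hx, hy, hxy⟩
  have := congrArg (detLeft B) hxy
  rw [detLeft_apply, h.det_add_zsmul, map_add, detLeft_apply, detLeft_apply] at this
  linarith [h.one_le_det_of_totPos hx, h.one_le_det_of_totPos hy]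

theorem card_le_det_sum (h : SemiconvBasis D A B N) {S : Multiset OK}
    (hS : ∀ x ∈ S, TotPos D x) : (Multiset.card S : ℤ) ≤ det S.sum B := by
  rw [← detLeft_apply, map_multiset_sum]
  have := Multiset.card_nsmul_le_sum (s := S.map (detLeft B)) (a := 1)
    (Multiset.forall_mem_map_iff.2 fun x hx => h.one_le_det_of_totPos (hS x hx))
  simpa using this

theorem det_add_add_zsmul (h : SemiconvBasis D A B N) (t : ℤ) : det (A + A + t • B) B = 2 := by
  have := h.det_eq_one
  simp only [det, Prod.fst_add, Prod.snd_add, Prod.smul_fst, Prod.smul_snd, smul_eq_mul] at *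
  linear_combination 2 * this

theorem exists_pair_eq_of_add_eq (h : SemiconvBasis D A B N) {t : ℤ} {x y : OK}
    (hx : TotPos D x) (hy : TotPos D y) (hxy : x + y = A + A + t • B) :
    ∃ s, (max 0 (t - N) ≤ s ∧ s ≤ t / 2) ∧
      ({A + s • B, A + (t - s) • B} : Multiset OK) = {x, y} := by
  have hdet : det x B + det y B = 2 := by
    rw [← detLeft_apply, ← detLeft_apply, ← map_add, hxy, detLeft_apply, h.det_add_add_zsmul]
  have hx₁ := h.one_le_det_of_totPos hx
  have hy₁ := h.one_le_det_of_totPos hy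
  obtain ⟨s, hs, rfl⟩ := h.exists_eq_add_zsmul hx (by omega)
  obtain ⟨s', hs', rfl⟩ := h.exists_eq_add_zsmul hy (by omega)
  have hst : s + s' = t := h.add_zsmul_injective <|
    calc A + (s + s') • B = -A + ((A + s • B) + (A + s' • B)) := by rw [add_smul]; abel
      _ = A + t • B := by rw [hxy]; abel
  rcases le_total s s' with hle | hle
  · exact ⟨s, by omega, by rw [show t - s = s' by omega]⟩
  · exact ⟨s', by omega, by rw [show t - s' = s by omega, Multiset.pair_comm]⟩

theorem pKI_add_add_zsmul (h : SemiconvBasis D A B N) {t : ℤ} (ht₀ : 0 ≤ t) (ht : t ≤ 2 * N) :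
    pKI D (A + A + t • B) = (Finset.Icc (max 0 (t - N)) (t / 2)).card := by
  set pair : ℤ → Multiset OK := fun s => {A + s • B, A + (t - s) • B}
  have hsplit : {S : Multiset OK | (∀ x ∈ S, Indec D x) ∧ S.sum = A + A + t • B} =
      (Finset.Icc (max 0 (t - N)) (t / 2)).image pair := by
    ext S
    simp only [Set.mem_ofPred_eq, Finset.coe_image, Set.mem_image, Finset.mem_coe,
      Finset.mem_Icc]
    constructor
    · rintro ⟨hS, hsum⟩
      have hcard := h.card_le_det_sum fun x hx => (hS x hx).1
      rw [hsum, h.det_add_add_zsmul] at hcard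
      obtain hc | hc | hc : Multiset.card S = 0 ∨ Multiset.card S = 1 ∨ Multiset.card S = 2 := by
        omega
      · rw [Multiset.card_eq_zero.1 hc, Multiset.sum_zero] at hsum
        have := h.det_add_add_zsmul t
        rw [← hsum] at this
        simp [det] at this
      · obtain ⟨x, rfl⟩ := Multiset.card_eq_one.1 hc
        rw [Multiset.sum_singleton] at hsum
        refine absurd ⟨A + (t / 2) • B, A + (t - t / 2) • B, ?_, ?_, ?_⟩ (hS x (by simp)).2
        · exact (h.totPos_add_zsmul_iff _).2 (by omega)
        · exact (h.totPos_add_zsmul_iff _).2 (by omega)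
        · rw [hsum, sub_smul]; abel
      · obtain ⟨x, y, rfl⟩ := Multiset.card_eq_two.1 hc
        exact h.exists_pair_eq_of_add_eq (hS x (by simp)).1 (hS y (by simp)).1
          (by simpa using hsum)
    · rintro ⟨s, hs, rfl⟩
      refine ⟨fun x hx => ?_, by simp [pair, sub_smul]; abel⟩
      simp only [pair, Multiset.insert_eq_cons, Multiset.mem_cons, Multiset.mem_singleton] at hx
      rcases hx with rfl | rfl
      · exact h.indec_add_zsmul (by omega)
      · exact h.indec_add_zsmul (by omega)
  rw [pKI, hsplit, Set.ncard_coe_finset, Finset.card_image_of_injOn]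
  intro s₁ hs₁ s₂ hs₂ heq
  simp only [Finset.coe_Icc, Set.mem_Icc] at hs₁ hs₂
  have : A + s₁ • B ∈ pair s₂ := heq ▸ by simp [pair]
  simp only [pair, Multiset.insert_eq_cons, Multiset.mem_cons, Multiset.mem_singleton] at this
  rcases this with h' | h'
  · exact h.add_zsmul_injective h'
  · have := h.add_zsmul_injective h'
    omega

theorem beta_succ_eq (h : SemiconvBasis D A B N) {β : ℤ → OK} {v : ℤ → ℤ}
    (hβ : BetaSeq D β v) {j r : ℤ} (hr₀ : 0 ≤ r) (hr : r + 1 ≤ N) (hj : β j = A + r • B) :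
    β (j + 1) = A + (r + 1) • B := by
  have hB := h.emb1_right_pos
  have hr' : (0 : ℝ) ≤ r := by exact_mod_cast hr₀
  obtain ⟨j', hj'⟩ := hβ.surj _ (h.indec_add_zsmul (s := r + 1) ⟨by omega, hr⟩)
  have hjj' : j < j' := hβ.mono.lt_iff_lt.1 <| by
    simp only [hj, hj', emb1_add, emb1_zsmul, Int.cast_add, Int.cast_one]
    linarith
  obtain rfl | hlt : j' = j + 1 ∨ j + 1 < j' := by omega
  · exact hj'
  · exfalso
    have hq₂ := ((h.totPos_add_zsmul_iff (r + 1)).2 ⟨by omega, hr⟩).2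
    have hB₂ := h.emb2_right_neg
    have hdet : det (A + r • B) (A + (r + 1) • B) = 1 := by
      have := h.det_eq_one
      simp only [det, Prod.fst_add, Prod.snd_add, Prod.smul_fst, Prod.smul_snd,
        smul_eq_mul] at *
      linear_combination this
    have hsub := totPos_sub_of_emb1_mem_Ioo hdet
      (by simp only [emb1_add, emb1_zsmul]; nlinarith [h.emb1_pos])
      (by simp only [emb1_add, emb1_zsmul, Int.cast_add, Int.cast_one]; linarith)
      hq₂
      (by simp only [emb2_add, emb2_zsmul, Int.cast_add, Int.cast_one]; linarith)
      (hβ.indec (j + 1)).1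
      (hj ▸ hβ.mono (lt_add_one j))
      (hj' ▸ hβ.mono hlt)
    exact (hβ.indec (j + 1)).2 ⟨β j, β (j + 1) - β j, (hβ.indec j).1, hj ▸ hsub, by abel⟩

end SemiconvBasis

theorem one_lt_omegaD {D : ℕ} (hD : 2 ≤ D) : 1 < omegaD D := by
  have hD' : (2 : ℝ) ≤ D := by exact_mod_cast hD
  have hsq := Real.sq_sqrt (show (0 : ℝ) ≤ D by linarith)
  have := Real.sqrt_nonneg (D : ℝ)
  unfold omegaD
  split_ifs <;> nlinarith

section Convergents

variable {D : ℕ} {u : ℕ → ℕ} {γ : ℕ → ℝ} {a : ℤ → OK}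

def convSeq (a : ℤ → OK) (m : ℕ) : OK := a (m - 1)

theorem convSeq_zero (hconv : ConvData D u a) : convSeq a 0 = (1, 0) := by
  simpa [convSeq] using hconv.neg_one

theorem convSeq_one (hconv : ConvData D u a) : convSeq a 1 =
    (⌊omegaD D⌋, 0) + (if D % 4 = 1 then ((-1 : ℤ), (1 : ℤ)) else (0, 1)) := by
  simpa [convSeq] using hconv.zero

theorem convSeq_add_two (hconv : ConvData D u a) (m : ℕ) :
    convSeq a (m + 2) = (u (m + 1) : ℤ) • convSeq a (m + 1) + convSeq a m := by
  have h := hconv.recur ((m : ℤ) - 1) (by omega)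
  rw [show (m : ℤ) - 1 + 2 = ((m + 2 : ℕ) : ℤ) - 1 by push_cast; ring,
    show (m : ℤ) - 1 + 1 = ((m + 1 : ℕ) : ℤ) - 1 by push_cast; ring,
    show (((m + 2 : ℕ) : ℤ) - 1).toNat = m + 1 by omega] at h
  exact h

theorem det_convSeq (hconv : ConvData D u a) (m : ℕ) :
    det (convSeq a m) (convSeq a (m + 1)) = (-1) ^ m := by
  induction m with
  | zero =>
    have h1 : (convSeq a 1).2 = 1 := by
      rw [convSeq_one hconv]
      split_ifs <;> rfl
    simp [det, convSeq_zero hconv, h1]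
  | succ m ih =>
    rw [convSeq_add_two hconv, pow_succ]
    simp only [det, Prod.fst_add, Prod.snd_add, Prod.smul_fst, Prod.smul_snd,
      smul_eq_mul] at ih ⊢
    linear_combination -ih

theorem one_le_u (hCF : CFData D u γ) (m : ℕ) : 1 ≤ u (m + 1) := by
  have h := hCF.floor_eq (m + 1) (by omega)
  have : (1 : ℤ) ≤ ⌊γ (m + 1)⌋ := Int.le_floor.2 (by exact_mod_cast (hCF.one_lt _ (by omega)).le)
  omega

theorem emb1_convSeq (hD : 2 ≤ D) (hCF : CFData D u γ) (hconv : ConvData D u a) (m : ℕ) :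
    0 < emb1 D (convSeq a m) ∧ emb1 D (convSeq a m) < emb1 D (convSeq a (m + 1)) := by
  induction m with
  | zero =>
    have hω := one_lt_omegaD hD
    have hfl : (1 : ℝ) ≤ ⌊omegaD D⌋ := by exact_mod_cast Int.le_floor.2 (by exact_mod_cast hω.le)
    rw [convSeq_zero hconv, zero_add, convSeq_one hconv]
    unfold emb1
    split_ifs <;> simp only [Prod.fst_add, Prod.snd_add] <;> push_cast <;> constructor <;> linarith
  | succ m ih =>
    have hu : (1 : ℝ) ≤ u (m + 1) := by exact_mod_cast one_le_u hCF m
    refine ⟨ih.1.trans ih.2, ?_⟩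
    rw [convSeq_add_two hconv, emb1_add, emb1_zsmul]
    push_cast
    nlinarith

theorem emb2_convSeq_eq (hCF : CFData D u γ) (hconv : ConvData D u a) (m : ℕ) :
    emb2 D (convSeq a m) = -γ (m + 1) * emb2 D (convSeq a (m + 1)) := by
  induction m with
  | zero =>
    have h1 : emb2 D (convSeq a 1) = ⌊omegaD D⌋ - omegaD D := by
      rw [convSeq_one hconv]
      unfold emb2 omegaD omegaD'
      split_ifs <;> simp only [Prod.fst_add, Prod.snd_add] <;> push_cast <;> ring
    have hγ : γ 1 ≠ 0 := (zero_lt_one.trans (hCF.one_lt 1 le_rfl)).ne'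
    rw [zero_add, h1, convSeq_zero hconv, show ⌊omegaD D⌋ - omegaD D = -(1 / γ 1) by
      linarith [hCF.head]]
    simp [emb2]
    field_simp
  | succ m ih =>
    have hstep := hCF.step (m + 1) (by omega)
    have hγ : γ (m + 2) ≠ 0 := (zero_lt_one.trans (hCF.one_lt (m + 2) (by omega))).ne'
    rw [convSeq_add_two hconv, emb2_add, emb2_zsmul, ih, hstep]
    push_cast
    field_simp
    ring

theorem neg_one_pow_mul_emb2_convSeq_pos (hCF : CFData D u γ) (hconv : ConvData D u a)
    (m : ℕ) : 0 < (-1) ^ m * emb2 D (convSeq a m) := by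
  induction m with
  | zero => simp [convSeq_zero hconv, emb2]
  | succ m ih =>
    have hγ : 0 < γ (m + 1) := zero_lt_one.trans (hCF.one_lt _ (by omega))
    refine pos_of_mul_pos_right (a := γ (m + 1)) ?_ hγ.le
    rw [emb2_convSeq_eq hCF hconv m] at ih
    linear_combination ih

theorem semiconvBasis_convSeq (hD : 2 ≤ D) (hCF : CFData D u γ) (hconv : ConvData D u a)
    {m : ℕ} (hm : Even m) :
    SemiconvBasis D (convSeq a m) (convSeq a (m + 1)) (u (m + 1)) := by
  have hnext : convSeq a m + (u (m + 1) : ℤ) • convSeq a (m + 1) = convSeq a (m + 2) := by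
    rw [convSeq_add_two hconv, add_comm]
  have hpos : 0 < emb2 D (convSeq a (m + 2)) := by
    simpa [(hm.add even_two).neg_one_pow] using neg_one_pow_mul_emb2_convSeq_pos hCF hconv (m + 2)
  refine ⟨by rw [det_convSeq hconv, hm.neg_one_pow], (emb1_convSeq hD hCF hconv m).1,
    (emb1_convSeq hD hCF hconv m).2, Nat.cast_nonneg _, hnext ▸ hpos, ?_⟩
  rw [add_smul, one_smul, ← add_assoc, hnext, emb2_add, emb2_convSeq_eq hCF hconv (m + 1)]
  have := hCF.one_lt (m + 2) (by omega)
  nlinarith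

theorem semiconvBasis_of_odd (hD : 2 ≤ D) (hCF : CFData D u γ) (hconv : ConvData D u a)
    {i : ℤ} (hi : -1 ≤ i) (hodd : Odd i) :
    SemiconvBasis D (a i) (a (i + 1)) (u (i + 2).toNat) := by
  obtain ⟨k, rfl⟩ := hodd
  have hm : Even (2 * k + 2).toNat := ⟨(k + 1).toNat, by omega⟩
  have h := semiconvBasis_convSeq hD hCF hconv hm
  rwa [convSeq, convSeq, show ((2 * k + 2).toNat : ℤ) - 1 = 2 * k + 1 by omega,
    show (((2 * k + 2).toNat + 1 : ℕ) : ℤ) - 1 = 2 * k + 1 + 1 by omega,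
    show (2 * k + 2).toNat + 1 = (2 * k + 1 + 2).toNat by omega] at h

end Convergents

theorem stmt3_general (D : ℕ) (hD : 2 ≤ D)
    (u : ℕ → ℕ) (γ : ℕ → ℝ) (hCF : CFData D u γ)
    (a : ℤ → OK) (hconv : ConvData D u a)
    (β : ℤ → OK) (v : ℤ → ℤ) (hβ : BetaSeq D β v)
    (i : ℤ) (hi : -1 ≤ i) (hodd : Odd i)
    (r : ℤ) (hr0 : 0 ≤ r) (hr1 : r ≤ (u (i + 2).toNat : ℤ) - 1)
    (j : ℤ) (hj : β j = semiconv a i r) :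
    pKI D (β j + β j) = (min (r + 1) ((u (i + 2).toNat : ℤ) - r + 1)).toNat ∧
    pKI D (β j + β (j + 1)) = (min (r + 1) ((u (i + 2).toNat : ℤ) - r)).toNat := by
  have h := semiconvBasis_of_odd hD hCF hconv hi hodd
  have hsucc := h.beta_succ_eq hβ hr0 (by omega) hj
  rw [semiconv] at hj
  have h₂ : β j + β j = a i + a i + (2 * r) • a (i + 1) := by rw [hj, two_mul, add_smul]; abel
  have h₁ : β j + β (j + 1) = a i + a i + (2 * r + 1) • a (i + 1) := by
    rw [hj, hsucc, add_smul, add_smul, two_mul, add_smul]; abel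
  rw [h₂, h₁, h.pKI_add_add_zsmul (by omega) (by omega),
    h.pKI_add_add_zsmul (by omega) (by omega), Int.card_Icc, Int.card_Icc]
  omega

/-- `p_K(2β_j|I) = min{r+1, u_{i+2}-r+1}` and
`p_K(β_j+β_{j+1}|I) = min{r+1, u_{i+2}-r}` for `β_j = α_{i,r}`. -/
theorem stmt3 (D : ℕ) (hD : 2 ≤ D) (hsq : Squarefree D)
    (u : ℕ → ℕ) (γ : ℕ → ℝ) (hCF : CFData D u γ)
    (a : ℤ → OK) (hconv : ConvData D u a)
    (β : ℤ → OK) (v : ℤ → ℤ) (hβ : BetaSeq D β v)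
    (i : ℤ) (hi : -1 ≤ i) (hodd : Odd i)
    (r : ℤ) (hr0 : 0 ≤ r) (hr1 : r ≤ (u (i + 2).toNat : ℤ) - 1)
    (j : ℤ) (hj : β j = semiconv a i r) :
    pKI D (β j + β j) = (min (r + 1) ((u (i + 2).toNat : ℤ) - r + 1)).toNat ∧
    pKI D (β j + β (j + 1)) = (min (r + 1) ((u (i + 2).toNat : ℤ) - r)).toNat :=
  stmt3_general D hD u γ hCF a hconv β v hβ i hi hodd r hr0 hr1 j hj
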